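/- arXiv:2601.13281 — 2 statements merged into one kernel-verified Lean document; each statement's English description precedes it below -/
import Mathlib

section
/- (Gaussian special case of the spectral score equations.) Let d ≥ 1, let W be a real d×d orthogonal matrix, fix an index i and fix positive values λ_k for k ≠ i, and let y ∈ ℝ^d. For f ∈ ℝ let Λ(f) have i-th diagonal entry e^f and k-th entry λ_k (k ≠ i), Σ(f) = W Λ(f) Wᵀ, Δ(f) = diag(Σ(f)), R(f) = Δ(f)^{-1/2} Σ(f) Δ(f)^{-1/2}. Then the Gaussian log-likelihood term ℓ(f) = −(1/2) log det R(f) − (1/2) yᵀ R(f)^{-1} y is differentiable in f with derivative ℓ'(f) = (1/2)(ỹ_i²/λ_i − 1) − (ỹᵀ Λ^{-1} ȳ_i − trace(Σ̇_i)), where λ_i = e^f, ỹ = Wᵀ Δ^{1/2} y with i-th component ỹ_i, Σ̇_i = (1/2) λ_i diag(W_{1i}²/Σ_{11},…,W_{di}²/Σ_{dd}), and ȳ_i = Wᵀ Δ^{1/2} Σ̇_i y. -/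
open Matrix

/-- `Σ = W Λ Wᵀ` for a diagonal `Λ` with entries `lam`. -/
noncomputable def Sig {d : ℕ} (W : Matrix (Fin d) (Fin d) ℝ) (lam : Fin d → ℝ) :
    Matrix (Fin d) (Fin d) ℝ :=
  W * Matrix.diagonal lam * Wᵀ

/-- `Δ^{1/2}`: the diagonal matrix with entries `√(Σ_{jj})`. -/
noncomputable def Dhalf {d : ℕ} (W : Matrix (Fin d) (Fin d) ℝ) (lam : Fin d → ℝ) :
    Matrix (Fin d) (Fin d) ℝ :=
  Matrix.diagonal fun j => Real.sqrt (Sig W lam j j)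

/-- `R = Δ^{-1/2} Σ Δ^{-1/2}` with `Δ = diag(Σ)`. -/
noncomputable def Rmat {d : ℕ} (W : Matrix (Fin d) (Fin d) ℝ) (lam : Fin d → ℝ) :
    Matrix (Fin d) (Fin d) ℝ :=
  Matrix.diagonal (fun j => (Real.sqrt (Sig W lam j j))⁻¹) * Sig W lam *
    Matrix.diagonal (fun j => (Real.sqrt (Sig W lam j j))⁻¹)

/-- `Σ̇_i = (1/2) λ_i diag(W_{1i}²/Σ_{11}, …, W_{di}²/Σ_{dd})`. -/
noncomputable def Sdot {d : ℕ} (W : Matrix (Fin d) (Fin d) ℝ) (lam : Fin d → ℝ) (i : Fin d) :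
    Matrix (Fin d) (Fin d) ℝ :=
  Matrix.diagonal fun j => (1 / 2) * lam i * (W j i) ^ 2 / Sig W lam j j

/-- The rescaled-and-rotated vector `ỹ = Wᵀ Δ^{1/2} y`. -/
noncomputable def tilde {d : ℕ} (W : Matrix (Fin d) (Fin d) ℝ) (lam : Fin d → ℝ)
    (y : Fin d → ℝ) : Fin d → ℝ :=
  (Wᵀ * Dhalf W lam) *ᵥ y

/-- The vector `ȳ_i = Wᵀ Δ^{1/2} Σ̇_i y`. -/
noncomputable def barv {d : ℕ} (W : Matrix (Fin d) (Fin d) ℝ) (lam : Fin d → ℝ) (i : Fin d)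
    (y : Fin d → ℝ) : Fin d → ℝ :=
  (Wᵀ * Dhalf W lam * Sdot W lam i) *ᵥ y

namespace GaussAux
open Finset Real

variable {d : ℕ} {W : Matrix (Fin d) (Fin d) ℝ}

lemma sig_diag (lam : Fin d → ℝ) (j : Fin d) :
    Sig W lam j j = ∑ k, W j k ^ 2 * lam k := by
  rw [Sig, Matrix.mul_apply]
  simp only [Matrix.mul_diagonal, Matrix.transpose_apply]
  exact Finset.sum_congr rfl fun k _ => by ring

lemma row_sq (hW : Wᵀ * W = 1) (j : Fin d) : ∑ k, W j k ^ 2 = 1 := by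
  have h : W * Wᵀ = 1 := by rwa [mul_eq_one_comm] at hW
  have h2 := congrArg (fun M => M j j) h
  simpa [Matrix.mul_apply, sq, Matrix.one_apply] using h2

lemma sig_pos (hW : Wᵀ * W = 1) (lam : Fin d → ℝ) (hlam : ∀ k, 0 < lam k) (j : Fin d) :
    0 < Sig W lam j j := by
  rw [sig_diag]
  obtain ⟨k, hk⟩ : ∃ k, W j k ≠ 0 := by
    by_contra h
    push_neg at h
    have h2 := row_sq hW j
    simp [h] at h2
  exact Finset.sum_pos' (fun m _ => mul_nonneg (sq_nonneg _) (hlam m).le)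
    ⟨k, Finset.mem_univ k, mul_pos (pow_two_pos_of_ne_zero hk) (hlam k) ⟩

lemma tilde_apply (lam : Fin d → ℝ) (y : Fin d → ℝ) (k : Fin d) :
    tilde W lam y k = ∑ j, W j k * Real.sqrt (Sig W lam j j) * y j := by
  simp [tilde, Dhalf, Matrix.mulVec, dotProduct, Matrix.mul_diagonal,
    Matrix.transpose_apply]

lemma barv_apply (lam : Fin d → ℝ) (i : Fin d) (y : Fin d → ℝ) (k : Fin d) :
    barv W lam i y k = ∑ j, W j k * Real.sqrt (Sig W lam j j) *
      ((1 / 2) * lam i * (W j i) ^ 2 / Sig W lam j j) * y j := by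
  simp [barv, Sdot, Dhalf, Matrix.mulVec, dotProduct, Matrix.mul_diagonal,
    Matrix.transpose_apply]

end GaussAux

namespace GaussAux
variable {d : ℕ} {W : Matrix (Fin d) (Fin d) ℝ}

lemma det_R (hW : Wᵀ * W = 1) (lam : Fin d → ℝ) (hlam : ∀ k, 0 < lam k) :
    (Rmat W lam).det = (∏ k, lam k) * ∏ j, (Sig W lam j j)⁻¹ := by
  have hdW : W.det * W.det = 1 := by
    have h := congrArg Matrix.det hW
    rwa [Matrix.det_mul, Matrix.det_transpose, Matrix.det_one] at h
  have hS : ∀ j, 0 < Sig W lam j j := sig_pos hW lam hlam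
  have key : (∏ j, (Real.sqrt (Sig W lam j j))⁻¹) * (∏ j, (Real.sqrt (Sig W lam j j))⁻¹)
      = ∏ j, (Sig W lam j j)⁻¹ := by
    rw [← Finset.prod_mul_distrib]
    exact Finset.prod_congr rfl fun j _ => by
      rw [← mul_inv, Real.mul_self_sqrt (hS j).le]
  have hdetSig : (Sig W lam).det = ∏ k, lam k := by
    rw [Sig, Matrix.det_mul, Matrix.det_mul, Matrix.det_diagonal, Matrix.det_transpose]
    rw [show W.det * (∏ k, lam k) * W.det = (W.det * W.det) * ∏ k, lam k from by ring, hdW,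
      one_mul]
  rw [Rmat, Matrix.det_mul, Matrix.det_mul, Matrix.det_diagonal, hdetSig]
  rw [show (∏ j, (Real.sqrt (Sig W lam j j))⁻¹) * (∏ k, lam k)
      * (∏ j, (Real.sqrt (Sig W lam j j))⁻¹)
    = (∏ k, lam k) * ((∏ j, (Real.sqrt (Sig W lam j j))⁻¹) *
       (∏ j, (Real.sqrt (Sig W lam j j))⁻¹)) from by ring, key]

lemma log_det_R (hW : Wᵀ * W = 1) (lam : Fin d → ℝ) (hlam : ∀ k, 0 < lam k) :
    Real.log (Rmat W lam).det
      = (∑ k, Real.log (lam k)) - ∑ j, Real.log (Sig W lam j j) := by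
  have hS : ∀ j, 0 < Sig W lam j j := sig_pos hW lam hlam
  rw [det_R hW lam hlam, Real.log_mul (Finset.prod_ne_zero_iff.mpr fun k _ => (hlam k).ne')
      (Finset.prod_ne_zero_iff.mpr fun j _ => inv_ne_zero (hS j).ne'),
    Real.log_prod (fun k _ => (hlam k).ne'),
    Real.log_prod (fun j _ => inv_ne_zero (hS j).ne')]
  simp [Real.log_inv, sub_eq_add_neg]

lemma inv_R (hW : Wᵀ * W = 1) (lam : Fin d → ℝ) (hlam : ∀ k, 0 < lam k) :
    (Rmat W lam)⁻¹ = Dhalf W lam * W * Matrix.diagonal (fun k => (lam k)⁻¹) * Wᵀ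
      * Dhalf W lam := by
  apply Matrix.inv_eq_right_inv
  have hWWt : W * Wᵀ = 1 := by rwa [mul_eq_one_comm] at hW
  have hS : ∀ j, 0 < Sig W lam j j := sig_pos hW lam hlam
  have hs : ∀ j, Real.sqrt (Sig W lam j j) ≠ 0 := fun j => (Real.sqrt_pos.mpr (hS j)).ne'
  have hDinvD : Matrix.diagonal (fun j => (Real.sqrt (Sig W lam j j))⁻¹) * Dhalf W lam = 1 := by
    rw [Dhalf, Matrix.diagonal_mul_diagonal]
    rw [show (fun j => (Real.sqrt (Sig W lam j j))⁻¹ * Real.sqrt (Sig W lam j j))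
        = fun _ => (1:ℝ) from funext fun j => inv_mul_cancel₀ (hs j), Matrix.diagonal_one]
  have hLLi : Matrix.diagonal lam * Matrix.diagonal (fun k => (lam k)⁻¹) = 1 := by
    rw [Matrix.diagonal_mul_diagonal]
    rw [show (fun k => lam k * (lam k)⁻¹) = fun _ => (1:ℝ) from
      funext fun k => mul_inv_cancel₀ (hlam k).ne', Matrix.diagonal_one]
  have hSigW : ∀ X : Matrix (Fin d) (Fin d) ℝ,
      Sig W lam * (W * (Matrix.diagonal (fun k => (lam k)⁻¹) * X)) = W * X := by
    intro X
    rw [Sig]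
    simp only [Matrix.mul_assoc]
    rw [show Wᵀ * (W * (Matrix.diagonal (fun k => (lam k)⁻¹) * X))
        = (Wᵀ * W) * (Matrix.diagonal (fun k => (lam k)⁻¹) * X) from by
      simp only [Matrix.mul_assoc], hW, Matrix.one_mul, ← Matrix.mul_assoc
        (Matrix.diagonal lam), hLLi, Matrix.one_mul]
  rw [Rmat]
  simp only [Matrix.mul_assoc]
  rw [show Matrix.diagonal (fun j => (Real.sqrt (Sig W lam j j))⁻¹)
        * (Dhalf W lam * (W * (Matrix.diagonal (fun k => (lam k)⁻¹) * (Wᵀ * Dhalf W lam))))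
      = W * (Matrix.diagonal (fun k => (lam k)⁻¹) * (Wᵀ * Dhalf W lam)) from by
    rw [← Matrix.mul_assoc, hDinvD, Matrix.one_mul]]
  rw [hSigW (Wᵀ * Dhalf W lam)]
  rw [show W * (Wᵀ * Dhalf W lam) = Dhalf W lam from by
    rw [← Matrix.mul_assoc, hWWt, Matrix.one_mul], hDinvD]

lemma quad_eq (hW : Wᵀ * W = 1) (lam : Fin d → ℝ) (hlam : ∀ k, 0 < lam k) (y : Fin d → ℝ) :
    y ⬝ᵥ ((Rmat W lam)⁻¹ *ᵥ y) = ∑ k, (tilde W lam y k) ^ 2 / lam k := by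
  rw [inv_R hW lam hlam]
  have hM : Dhalf W lam * W * Matrix.diagonal (fun k => (lam k)⁻¹) * Wᵀ * Dhalf W lam
      = (Wᵀ * Dhalf W lam)ᵀ * (Matrix.diagonal (fun k => (lam k)⁻¹) * (Wᵀ * Dhalf W lam)) := by
    rw [Matrix.transpose_mul, Matrix.transpose_transpose, Dhalf, Matrix.diagonal_transpose]
    rw [← Dhalf]
    simp only [Matrix.mul_assoc]
  rw [hM, ← Matrix.mulVec_mulVec, Matrix.dotProduct_mulVec, Matrix.vecMul_transpose]
  rw [show (Wᵀ * Dhalf W lam) *ᵥ y = tilde W lam y from rfl]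
  rw [← Matrix.mulVec_mulVec]
  rw [show (Wᵀ * Dhalf W lam) *ᵥ y = tilde W lam y from rfl]
  rw [show Matrix.diagonal (fun k => (lam k)⁻¹) *ᵥ tilde W lam y
      = fun k => (lam k)⁻¹ * tilde W lam y k from funext fun k => Matrix.mulVec_diagonal _ _ _]
  rw [dotProduct]
  exact Finset.sum_congr rfl fun k _ => by rw [div_eq_mul_inv]; ring

end GaussAux


open GaussAux in
/-- Gaussian special case of the spectral score equations: with the `i`-th
eigenvalue parameterized as `λ_i = e^f` (others fixed), the Gaussian log-likelihood term
`ℓ(f) = −(1/2) log det R(f) − (1/2) yᵀ R(f)⁻¹ y` is differentiable with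
`ℓ'(f) = (1/2)(ỹ_i²/λ_i − 1) − (ỹᵀ Λ⁻¹ ȳ_i − trace(Σ̇_i))`. -/
theorem gaussian_spectral_score {d : ℕ} (hd : 1 ≤ d)
    (W : Matrix (Fin d) (Fin d) ℝ) (hW : Wᵀ * W = 1)
    (i : Fin d) (lam : Fin d → ℝ) (hlam : ∀ k, k ≠ i → 0 < lam k)
    (y : Fin d → ℝ) (f : ℝ) :
    HasDerivAt
      (fun g : ℝ =>
        -(1 / 2) * Real.log (Rmat W (Function.update lam i (Real.exp g))).det
          - (1 / 2) * (y ⬝ᵥ ((Rmat W (Function.update lam i (Real.exp g)))⁻¹ *ᵥ y)))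
      ((1 / 2) * ((tilde W (Function.update lam i (Real.exp f)) y i) ^ 2 / Real.exp f - 1)
        - (tilde W (Function.update lam i (Real.exp f)) y ⬝ᵥ
              ((Matrix.diagonal (Function.update lam i (Real.exp f)))⁻¹ *ᵥ
                barv W (Function.update lam i (Real.exp f)) i y)
            - (Sdot W (Function.update lam i (Real.exp f)) i).trace)) f := by
  -- positivity of updated eigenvalues
  have hLpos : ∀ (g : ℝ) k, 0 < Function.update lam i (Real.exp g) k := by
    intro g k
    rcases eq_or_ne k i with h | h
    · subst h; simp [Function.update_self]; positivity
    · simpa [Function.update_apply, h] using hlam k h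
  have hSpos : ∀ (g : ℝ) j, 0 < Sig W (Function.update lam i (Real.exp g)) j j :=
    fun g j => sig_pos hW _ (hLpos g) j
  -- rewrite the function in elementary form
  have hfun : (fun g : ℝ =>
        -(1 / 2) * Real.log (Rmat W (Function.update lam i (Real.exp g))).det
          - (1 / 2) * (y ⬝ᵥ ((Rmat W (Function.update lam i (Real.exp g)))⁻¹ *ᵥ y)))
      = fun g : ℝ =>
        -(1 / 2) * (∑ k, Real.log (Function.update lam i (Real.exp g) k))
        + (1 / 2) * (∑ j, Real.log (Sig W (Function.update lam i (Real.exp g)) j j))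
        - (1 / 2) * ∑ k, (tilde W (Function.update lam i (Real.exp g)) y k) ^ 2
            / Function.update lam i (Real.exp g) k := by
    funext g
    rw [log_det_R hW _ (hLpos g), quad_eq hW _ (hLpos g)]
    ring
  rw [hfun]
  -- derivatives of the diagonal entries of Sigma
  have hSder : ∀ j, HasDerivAt (fun g => Sig W (Function.update lam i (Real.exp g)) j j)
      (W j i ^ 2 * Real.exp f) f := by
    intro j
    have heq : (fun g => Sig W (Function.update lam i (Real.exp g)) j j)
        = fun g => ∑ k, W j k ^ 2 * Function.update lam i (Real.exp g) k :=
      funext fun g => sig_diag _ _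
    rw [heq]
    have h1 : ∀ k ∈ Finset.univ, HasDerivAt
        (fun g => W j k ^ 2 * Function.update lam i (Real.exp g) k)
        (if k = i then W j i ^ 2 * Real.exp f else 0) f := by
      intro k _
      rcases eq_or_ne k i with h | h
      · rw [if_pos h, h]
        have heq2 : (fun g => W j i ^ 2 * Function.update lam i (Real.exp g) i)
            = fun g => W j i ^ 2 * Real.exp g := by
          funext g; rw [Function.update_self]
        rw [heq2]
        exact (Real.hasDerivAt_exp f).const_mul _
      · rw [if_neg h]
        have heq2 : (fun g => W j k ^ 2 * Function.update lam i (Real.exp g) k)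
            = fun _ => W j k ^ 2 * lam k := by
          funext g; rw [Function.update_of_ne h]
        rw [heq2]
        exact hasDerivAt_const _ _
    have h2 := HasDerivAt.fun_sum h1
    simpa using h2
  -- derivative of ∑ log λ_k
  have hloglam : HasDerivAt
      (fun g => ∑ k, Real.log (Function.update lam i (Real.exp g) k)) 1 f := by
    have h1 : ∀ k ∈ Finset.univ, HasDerivAt
        (fun g => Real.log (Function.update lam i (Real.exp g) k))
        (if k = i then 1 else 0) f := by
      intro k _
      rcases eq_or_ne k i with h | h
      · rw [if_pos h, h]
        have heq2 : (fun g => Real.log (Function.update lam i (Real.exp g) i))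
            = fun g => g := by
          funext g; rw [Function.update_self, Real.log_exp]
        rw [heq2]
        exact hasDerivAt_id f
      · rw [if_neg h]
        have heq2 : (fun g => Real.log (Function.update lam i (Real.exp g) k))
            = fun _ => Real.log (lam k) := by
          funext g; rw [Function.update_of_ne h]
        rw [heq2]
        exact hasDerivAt_const _ _
    have h2 := HasDerivAt.fun_sum h1
    simpa using h2
  -- derivative of tilde components
  have htyder : ∀ k, HasDerivAt (fun g => tilde W (Function.update lam i (Real.exp g)) y k)
      (∑ j, W j k * (W j i ^ 2 * Real.exp f
        / (2 * Real.sqrt (Sig W (Function.update lam i (Real.exp f)) j j))) * y j) f := by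
    intro k
    have heq : (fun g => tilde W (Function.update lam i (Real.exp g)) y k)
        = fun g => ∑ j, W j k * Real.sqrt (Sig W (Function.update lam i (Real.exp g)) j j)
            * y j := funext fun g => tilde_apply _ _ _
    rw [heq]
    refine HasDerivAt.fun_sum fun j _ => ?_
    have hsq := ((hSder j).sqrt (hSpos f j).ne')
    exact (hsq.const_mul (W j k)).mul_const (y j)
  -- derivative of the eigenvalue entries
  have hLder : ∀ k, HasDerivAt (fun g => Function.update lam i (Real.exp g) k)
      (if k = i then Real.exp f else 0) f := by
    intro k
    rcases eq_or_ne k i with h | h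
    · rw [if_pos h, h]
      have heq2 : (fun g => Function.update lam i (Real.exp g) i) = fun g => Real.exp g := by
        funext g; rw [Function.update_self]
      rw [heq2]; exact Real.hasDerivAt_exp f
    · rw [if_neg h]
      have heq2 : (fun g => Function.update lam i (Real.exp g) k) = fun _ => lam k := by
        funext g; rw [Function.update_of_ne h]
      rw [heq2]; exact hasDerivAt_const _ _
  set Lf := Function.update lam i (Real.exp f) with hLfdef
  set ty := tilde W Lf y with hty0
  set ty' : Fin d → ℝ := fun k => ∑ j, W j k * (W j i ^ 2 * Real.exp f
    / (2 * Real.sqrt (Sig W Lf j j))) * y j with hty'0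
  have hLfi : Lf i = Real.exp f := Function.update_self _ _ _
  have hquad : ∀ k ∈ Finset.univ, HasDerivAt
      (fun g => (tilde W (Function.update lam i (Real.exp g)) y k) ^ 2
        / Function.update lam i (Real.exp g) k)
      (2 * ty k * ty' k / Lf k - (if k = i then ty i ^ 2 / Real.exp f else 0)) f := by
    intro k _
    have hnum := (htyder k).pow 2
    have hdd := hnum.div (hLder k) (hLpos f k).ne'
    have hdd' : HasDerivAt
        (fun g => (tilde W (Function.update lam i (Real.exp g)) y k) ^ 2
          / Function.update lam i (Real.exp g) k)
        ((((2:ℕ):ℝ) * ty k ^ (2 - 1) * ty' k * Lf k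
            - ty k ^ 2 * (if k = i then Real.exp f else 0)) / Lf k ^ 2) f := hdd
    have hval : (((2:ℕ):ℝ) * ty k ^ (2 - 1) * ty' k * Lf k
          - ty k ^ 2 * (if k = i then Real.exp f else 0)) / Lf k ^ 2
        = 2 * ty k * ty' k / Lf k - (if k = i then ty i ^ 2 / Real.exp f else 0) := by
      rcases eq_or_ne k i with h | h
      · rw [if_pos h, if_pos h, h, hLfi]
        have he := Real.exp_ne_zero f
        norm_num
        field_simp
      · rw [if_neg h, if_neg h]
        have hne : Lf k ≠ 0 := (hLpos f k).ne'
        norm_num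
        field_simp
    rw [hval] at hdd'
    exact hdd'
  have hsum3 := HasDerivAt.fun_sum hquad
  have hsum2 : HasDerivAt
      (fun g => ∑ j, Real.log (Sig W (Function.update lam i (Real.exp g)) j j))
      (∑ j, W j i ^ 2 * Real.exp f / Sig W Lf j j) f :=
    HasDerivAt.fun_sum fun j _ => (hSder j).log (hSpos f j).ne'
  have hF := ((hloglam.const_mul (-(1/2:ℝ))).add (hsum2.const_mul (1/2:ℝ))).sub
    (hsum3.const_mul (1/2:ℝ))
  refine HasDerivAt.congr_deriv hF ?_
  -- now pure arithmetic identities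
  have htr : (Sdot W Lf i).trace = ∑ j, 1 / 2 * Real.exp f * W j i ^ 2 / Sig W Lf j j := by
    rw [Sdot, Matrix.trace_diagonal]
    exact Finset.sum_congr rfl fun j _ => by rw [hLfi]
  have hbar : ∀ k, barv W Lf i y k = ty' k := by
    intro k
    rw [barv_apply, hty'0]
    refine Finset.sum_congr rfl fun j _ => ?_
    have hSj : 0 < Sig W Lf j j := hSpos f j
    obtain ⟨t, ht, hts⟩ : ∃ t : ℝ, 0 < t ∧ t * t = Sig W Lf j j :=
      ⟨Real.sqrt _, Real.sqrt_pos.mpr hSj, Real.mul_self_sqrt hSj.le⟩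
    have hsq : Real.sqrt (Sig W Lf j j) = t := by
      rw [← hts, Real.sqrt_mul_self ht.le]
    rw [hLfi, hsq, ← hts]
    have htne := ht.ne'
    field_simp
  have hdot : ty ⬝ᵥ ((Matrix.diagonal Lf)⁻¹ *ᵥ barv W Lf i y)
      = ∑ k, ty k * ty' k / Lf k := by
    have hinv : (Matrix.diagonal Lf)⁻¹ = Matrix.diagonal (fun k => (Lf k)⁻¹) := by
      apply Matrix.inv_eq_right_inv
      rw [Matrix.diagonal_mul_diagonal,
        show (fun k => Lf k * (Lf k)⁻¹) = fun _ => (1:ℝ) from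
          funext fun k => mul_inv_cancel₀ (hLpos f k).ne', Matrix.diagonal_one]
    rw [hinv,
      show Matrix.diagonal (fun k => (Lf k)⁻¹) *ᵥ barv W Lf i y
        = fun k => (Lf k)⁻¹ * barv W Lf i y k from
        funext fun k => Matrix.mulVec_diagonal _ _ _,
      dotProduct]
    exact Finset.sum_congr rfl fun k _ => by rw [hbar k, div_eq_mul_inv]; ring
  rw [hdot, htr]
  have hsplit : ∑ k, (2 * ty k * ty' k / Lf k - (if k = i then ty i ^ 2 / Real.exp f else 0))
      = 2 * (∑ k, ty k * ty' k / Lf k) - ty i ^ 2 / Real.exp f := by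
    rw [Finset.sum_sub_distrib, Finset.sum_ite_eq' Finset.univ i, if_pos (Finset.mem_univ i),
      Finset.mul_sum]
    congr 1
    exact Finset.sum_congr rfl fun k _ => by ring
  rw [hsplit]
  have hc : ∑ j, 1 / 2 * Real.exp f * W j i ^ 2 / Sig W Lf j j
      = 1 / 2 * ∑ j, W j i ^ 2 * Real.exp f / Sig W Lf j j := by
    rw [Finset.mul_sum]
    exact Finset.sum_congr rfl fun j _ => by ring
  rw [hc]
  ring
end

section
/- Let d ≥ 1, let W be a real d×d orthogonal matrix, let Λ = diag(λ_1,…,λ_d) with all λ_i > 0, and let y ∈ ℝ^d. With Σ = W Λ Wᵀ, Δ = diag(Σ), R = Δ^{-1/2} Σ Δ^{-1/2}, ỹ = Wᵀ Δ^{1/2} y, Σ̇_i = (1/2) λ_i diag(W_{1i}²/Σ_{11},…,W_{di}²/Σ_{dd}), and ȳ_i = Wᵀ Δ^{1/2} Σ̇_i y, the Gaussian spectral scores ∇_i = (1/2)(ỹ_i²/λ_i − 1) − (ỹᵀ Λ^{-1} ȳ_i − trace(Σ̇_i)) sum to zero: Σ_{i=1}^d ∇_i = 0. -/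
open Matrix

lemma sig_diag {d : ℕ} (W : Matrix (Fin d) (Fin d) ℝ) (lam : Fin d → ℝ) (j : Fin d) :
    Sig W lam j j = ∑ k, lam k * W j k ^ 2 := by
  simp only [Sig, Matrix.mul_apply, Matrix.transpose_apply]
  refine Finset.sum_congr rfl fun k _ => ?_
  rw [Finset.sum_eq_single k (fun b _ hb => by simp [Matrix.diagonal_apply_ne _ hb])
    (by simp)]
  simp [Matrix.diagonal_apply_eq]
  ring

lemma sig_pos {d : ℕ} (W : Matrix (Fin d) (Fin d) ℝ) (hW : Wᵀ * W = 1)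
    (lam : Fin d → ℝ) (hlam : ∀ i, 0 < lam i) (j : Fin d) :
    0 < Sig W lam j j := by
  rw [sig_diag]
  have hWW : W * Wᵀ = 1 := mul_eq_one_comm.mp hW
  have hrow : ∑ k, W j k * W j k = 1 := by
    have := congrArg (fun M => M j j) hWW
    simpa [Matrix.mul_apply, Matrix.one_apply_eq] using this
  have hx : ∃ k : Fin d, W j k ≠ 0 := by
    by_contra h
    push_neg at h
    simp [h] at hrow
  obtain ⟨k, hk⟩ := hx
  apply Finset.sum_pos' (fun m _ => mul_nonneg (hlam m).le (sq_nonneg _))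
  exact ⟨k, Finset.mem_univ k,
    mul_pos (hlam k) (lt_of_le_of_ne (sq_nonneg _) (Ne.symm (pow_ne_zero 2 hk)))⟩

lemma key_sum {d : ℕ} (W : Matrix (Fin d) (Fin d) ℝ) (hW : Wᵀ * W = 1)
    (lam : Fin d → ℝ) (hlam : ∀ i, 0 < lam i) (j : Fin d) :
    ∑ i, (1 / 2) * lam i * W j i ^ 2 / Sig W lam j j = 1 / 2 := by
  have hS := sig_pos W hW lam hlam j
  rw [← Finset.sum_div]
  rw [show (∑ i, (1 / 2) * lam i * W j i ^ 2) = (1 / 2) * Sig W lam j j by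
    rw [sig_diag, Finset.mul_sum]; exact Finset.sum_congr rfl fun i _ => by ring]
  field_simp

lemma tilde_apply {d : ℕ} (W : Matrix (Fin d) (Fin d) ℝ) (lam : Fin d → ℝ)
    (y : Fin d → ℝ) (k : Fin d) :
    tilde W lam y k = ∑ j, W j k * Real.sqrt (Sig W lam j j) * y j := by
  simp [tilde, Matrix.mulVec, dotProduct, Dhalf, Matrix.mul_diagonal,
    Matrix.transpose_apply]

lemma barv_apply {d : ℕ} (W : Matrix (Fin d) (Fin d) ℝ) (lam : Fin d → ℝ) (i : Fin d)
    (y : Fin d → ℝ) (k : Fin d) :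
    barv W lam i y k
      = ∑ j, W j k * Real.sqrt (Sig W lam j j)
          * ((1 / 2) * lam i * W j i ^ 2 / Sig W lam j j) * y j := by
  simp [barv, Sdot, Matrix.mulVec, dotProduct, Dhalf, Matrix.mul_diagonal,
    Matrix.transpose_apply, Matrix.mul_assoc]

/-- the Gaussian spectral scores
`∇_i = (1/2)(ỹ_i²/λ_i − 1) − (ỹᵀ Λ⁻¹ ȳ_i − trace(Σ̇_i))` sum to zero. -/
theorem gaussian_spectral_scores_sum_zero {d : ℕ} (hd : 1 ≤ d)
    (W : Matrix (Fin d) (Fin d) ℝ) (hW : Wᵀ * W = 1)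
    (lam : Fin d → ℝ) (hlam : ∀ i, 0 < lam i)
    (y : Fin d → ℝ) :
    ∑ i, ((1 / 2) * ((tilde W lam y i) ^ 2 / lam i - 1)
        - (tilde W lam y ⬝ᵥ ((Matrix.diagonal lam)⁻¹ *ᵥ barv W lam i y)
            - (Sdot W lam i).trace)) = 0 := by
  have hlamne : ∀ i, lam i ≠ 0 := fun i => (hlam i).ne'
  set t := tilde W lam y with ht
  -- sum of each ȳ_i component over i
  have hbar : ∀ k, ∑ i, barv W lam i y k = (1 / 2) * t k := by
    intro k
    simp only [barv_apply]
    rw [Finset.sum_comm]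
    have hj : ∀ j, ∑ i, W j k * Real.sqrt (Sig W lam j j)
          * ((1 / 2) * lam i * W j i ^ 2 / Sig W lam j j) * y j
        = W j k * Real.sqrt (Sig W lam j j) * y j * (1 / 2) := fun j => by
      calc ∑ i, W j k * Real.sqrt (Sig W lam j j)
              * ((1 / 2) * lam i * W j i ^ 2 / Sig W lam j j) * y j
          = (∑ i, (1 / 2) * lam i * W j i ^ 2 / Sig W lam j j)
              * (W j k * Real.sqrt (Sig W lam j j) * y j) := by
            rw [Finset.sum_mul]; exact Finset.sum_congr rfl fun i _ => by ring
        _ = W j k * Real.sqrt (Sig W lam j j) * y j * (1 / 2) := by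
            rw [key_sum W hW lam hlam j]; ring
    rw [Finset.sum_congr rfl fun j _ => hj j, ← Finset.sum_mul, ← tilde_apply, ← ht, mul_comm]
  -- inverse of the diagonal matrix
  have hinv : (Matrix.diagonal lam)⁻¹ = Matrix.diagonal (fun k => (lam k)⁻¹) := by
    apply Matrix.inv_eq_right_inv
    ext a b
    rcases eq_or_ne a b with rfl | hab
    · simp [Matrix.diagonal_mul_diagonal, mul_inv_cancel₀ (hlamne a)]
    · simp [Matrix.diagonal_mul_diagonal, Matrix.diagonal_apply_ne _ hab,
        Matrix.one_apply_ne hab]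
  -- the bilinear term
  have hB : ∑ i, t ⬝ᵥ ((Matrix.diagonal lam)⁻¹ *ᵥ barv W lam i y)
      = ∑ k, t k * ((lam k)⁻¹ * ((1 / 2) * t k)) := by
    have hdot : ∀ i, t ⬝ᵥ ((Matrix.diagonal lam)⁻¹ *ᵥ barv W lam i y)
        = ∑ k, t k * ((lam k)⁻¹ * barv W lam i y k) := by
      intro i
      rw [hinv]
      simp [dotProduct, Matrix.mulVec_diagonal]
    simp only [hdot]
    rw [Finset.sum_comm]
    refine Finset.sum_congr rfl fun k _ => ?_
    rw [← Finset.mul_sum, ← Finset.mul_sum, hbar k]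
  -- the trace term
  have htr : ∑ i, (Sdot W lam i).trace = ∑ i : Fin d, (1 / 2 : ℝ) := by
    have : ∀ i, (Sdot W lam i).trace
        = ∑ j, (1 / 2) * lam i * W j i ^ 2 / Sig W lam j j := by
      intro i; simp [Sdot, Matrix.trace, Matrix.diag]
    simp only [this]
    rw [Finset.sum_comm]
    exact Finset.sum_congr rfl fun j _ => key_sum W hW lam hlam j
  rw [Finset.sum_sub_distrib, Finset.sum_sub_distrib, hB, htr]
  rw [← Finset.sum_sub_distrib, ← Finset.sum_sub_distrib]
  rw [Finset.sum_eq_zero]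
  intro i _
  have h := hlamne i
  field_simp
  ring
end
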